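/- arXiv:2501.15866 — 5 statements merged into one kernel-verified Lean document; each statement's English description precedes it below -/
import Mathlib

section
/- Fix q in (0,1) and define f: [0,∞) → ℝ by f(x) = 2x·q^x/(q·(1 − q^x)) for x > 0 and f(0) = −2/(q·ln q). Then f is continuous on [0,∞), strictly decreasing on [0,∞), and f(x) → 0 as x → ∞. -/
/-!
Write `c = -log q > 0` and let `E = dslope exp 0`, i.e. `E t = (exp t - 1) / t` with `E 0 = 1`.
Since `q ^ x = exp (-c x)`, `fAux q x = (2 / (q c)) / E (c x)` for every `x`, the value at `0`
included. By strict convexity of `exp`, `E` is strictly increasing; it is also continuous,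
positive, and tends to `∞`, which gives the three claims at once.
-/

/-- f(x) = 2x q^x / (q (1 - q^x)) for x > 0, f(0) = -2/(q ln q). -/
noncomputable def fAux (q : ℝ) (x : ℝ) : ℝ :=
  if x = 0 then -2 / (q * Real.log q)
  else 2 * x * q ^ x / (q * (1 - q ^ x))

open Real Set Filter

theorem StrictConvexOn.strictMonoOn_dslope {f : ℝ → ℝ} {S : Set ℝ} {a : ℝ}
    (hf : StrictConvexOn ℝ S f) (ha : a ∈ S) (hd : DifferentiableAt ℝ f a) :
    StrictMonoOn (dslope f a) S := by
  intro x hx y hy hxy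
  rcases eq_or_ne x a with rfl | hxa
  · rw [dslope_same, dslope_of_ne _ hxy.ne']
    exact hf.deriv_lt_slope hx hy hxy hd
  rcases eq_or_ne y a with rfl | hya
  · rw [dslope_same, dslope_of_ne _ hxa, slope_comm]
    exact hf.slope_lt_deriv hx hy hxy hd
  rw [dslope_of_ne _ hxa, dslope_of_ne _ hya, slope_def_field, slope_def_field]
  exact hf.secant_strict_mono ha hx hy hxa hya hxy

theorem strictMono_dslope_exp : StrictMono (dslope exp 0) := fun _ _ hxy =>
  strictConvexOn_exp.strictMonoOn_dslope (mem_univ 0) differentiableAt_exp trivial trivial hxy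

theorem continuous_dslope_exp : Continuous (dslope exp 0) :=
  continuousOn_univ.mp <| (continuousOn_dslope univ_mem).mpr
    ⟨continuous_exp.continuousOn, differentiableAt_exp⟩

theorem dslope_exp_pos (t : ℝ) : 0 < dslope exp 0 t := by
  rcases lt_trichotomy t 0 with ht | rfl | ht
  · rw [dslope_of_ne _ ht.ne, slope_def_field]
    exact div_pos_of_neg_of_neg (by simpa using ht) (by simpa using ht)
  · simp
  · rw [dslope_of_ne _ ht.ne', slope_def_field]
    exact div_pos (by simpa using ht) (by simpa using ht)

theorem tendsto_dslope_exp_atTop : Tendsto (dslope exp 0) atTop atTop := by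
  refine tendsto_atTop_mono' atTop ?_ (tendsto_id.atTop_div_const two_pos)
  filter_upwards [eventually_gt_atTop 0] with t ht
  rw [id, dslope_of_ne _ ht.ne', slope_def_field, sub_zero, exp_zero, le_div_iff₀ ht]
  nlinarith [quadratic_le_exp_of_nonneg ht.le]

theorem fAux_eq_div_dslope_exp {q : ℝ} (hq : 0 < q) (x : ℝ) :
    fAux q x = -2 / (q * log q) / dslope exp 0 (-log q * x) := by
  rcases eq_or_ne x 0 with rfl | hx
  · simp [fAux]
  rw [fAux, if_neg hx, rpow_def_of_pos hq]
  rcases eq_or_ne (log q) 0 with hlog | hlog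
  · simp [hlog]
  rw [dslope_of_ne _ (mul_ne_zero (neg_ne_zero.mpr hlog) hx), slope_def_field]
  have hE : exp (log q * x) ≠ 1 := by rw [Ne, exp_eq_one_iff]; exact mul_ne_zero hlog hx
  rw [neg_mul, exp_neg, exp_zero]
  field_simp
  ring

theorem fAux_cont_anti_tendsto (q : ℝ) (hq0 : 0 < q) (hq1 : q < 1) :
    ContinuousOn (fAux q) (Set.Ici 0) ∧
      StrictAntiOn (fAux q) (Set.Ici 0) ∧
      Filter.Tendsto (fAux q) Filter.atTop (nhds 0) := by
  have hlog : log q < 0 := log_neg hq0 hq1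
  have hK : 0 < -2 / (q * log q) :=
    div_pos_of_neg_of_neg (by norm_num) (mul_neg_of_pos_of_neg hq0 hlog)
  have hscale : StrictMono (fun x => -log q * x) := strictMono_mul_left_of_pos (by linarith)
  rw [show fAux q = _ from funext (fAux_eq_div_dslope_exp hq0)]
  refine ⟨?_, ?_, ?_⟩
  · exact (continuous_const.div (continuous_dslope_exp.comp (continuous_const_mul _))
      fun x => (dslope_exp_pos _).ne').continuousOn
  · intro x _ y _ hxy
    exact div_lt_div_of_pos_left hK (dslope_exp_pos _) (strictMono_dslope_exp (hscale hxy))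
  · exact tendsto_const_nhds.div_atTop
      (tendsto_dslope_exp_atTop.comp (tendsto_id.const_mul_atTop (by linarith)))
end

section
/- For every q in (0,1), the improper integral ∫₀^∞ (2x·q^x)/(q·(1 − q^x)) dx converges and equals π²/(3·q·(ln q)²). -/
open MeasureTheory Real Filter Set

/-!
With `b = -log q > 0` we have `q ^ x = exp (-b * x)`, and for `x > 0` the geometric series gives
`x * exp (-b * x) / (1 - exp (-b * x)) = ∑_{n ≥ 0} x * exp (-(n + 1) * b * x)`.
The `n`-th term integrates to `1 / ((n + 1) * b) ^ 2`, so by the Basel sum the integral is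
`π ^ 2 / (6 * b ^ 2)`. All terms are nonnegative, so monotone convergence justifies the termwise
integration and at the same time yields integrability.
-/

section SeriesOfNonnegFunctions

variable {α ι : Type*} [MeasurableSpace α] {μ : Measure α} [Countable ι]
  {F : ι → α → ℝ} {f : α → ℝ} {I : ℝ}

theorem lintegral_ofReal_eq_of_hasSum_of_nonneg (hF_nonneg : ∀ i, 0 ≤ᵐ[μ] F i)
    (hF_int : ∀ i, Integrable (F i) μ) (hF_sum : HasSum (fun i ↦ ∫ a, F i a ∂μ) I)
    (hf : ∀ᵐ a ∂μ, HasSum (fun i ↦ F i a) (f a)) :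
    ∫⁻ a, ENNReal.ofReal (f a) ∂μ = ENNReal.ofReal I := by
  have h_int_nonneg i : 0 ≤ ∫ a, F i a ∂μ := integral_nonneg_of_ae (hF_nonneg i)
  calc ∫⁻ a, ENNReal.ofReal (f a) ∂μ = ∫⁻ a, ∑' i, ENNReal.ofReal (F i a) ∂μ := by
        refine lintegral_congr_ae ?_
        filter_upwards [hf, ae_all_iff.2 hF_nonneg] with a ha ha_nonneg
        rw [← ha.tsum_eq, ENNReal.ofReal_tsum_of_nonneg ha_nonneg ha.summable]
    _ = ∑' i, ENNReal.ofReal (∫ a, F i a ∂μ) := by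
        rw [lintegral_tsum fun i ↦ (hF_int i).aemeasurable.ennreal_ofReal]
        exact tsum_congr fun i ↦
          (ofReal_integral_eq_lintegral_ofReal (hF_int i) (hF_nonneg i)).symm
    _ = ENNReal.ofReal I := by
        rw [← ENNReal.ofReal_tsum_of_nonneg h_int_nonneg hF_sum.summable, hF_sum.tsum_eq]

theorem integrable_and_integral_eq_of_hasSum_of_nonneg (hF_nonneg : ∀ i, 0 ≤ᵐ[μ] F i)
    (hF_int : ∀ i, Integrable (F i) μ) (hF_sum : HasSum (fun i ↦ ∫ a, F i a ∂μ) I)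
    (hf : ∀ᵐ a ∂μ, HasSum (fun i ↦ F i a) (f a)) :
    Integrable f μ ∧ ∫ a, f a ∂μ = I := by
  have hf_nonneg : 0 ≤ᵐ[μ] f := by
    filter_upwards [hf, ae_all_iff.2 hF_nonneg] with a ha ha_nonneg
    exact ha.nonneg ha_nonneg
  have hf_meas : AEStronglyMeasurable f μ :=
    aestronglyMeasurable_of_tendsto_ae atTop
      (fun s : Finset ι ↦ s.aestronglyMeasurable_sum fun i _ ↦ (hF_int i).1)
      (by simpa [HasSum] using hf)
  have h_lint := lintegral_ofReal_eq_of_hasSum_of_nonneg hF_nonneg hF_int hF_sum hf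
  have hI : 0 ≤ I := hF_sum.nonneg fun i ↦ integral_nonneg_of_ae (hF_nonneg i)
  have hf_fin : HasFiniteIntegral f μ :=
    (hasFiniteIntegral_iff_ofReal hf_nonneg).2 (h_lint ▸ ENNReal.ofReal_lt_top)
  refine ⟨⟨hf_meas, hf_fin⟩, ?_⟩
  rw [integral_eq_lintegral_of_nonneg_ae hf_nonneg hf_meas, h_lint, ENNReal.toReal_ofReal hI]

end SeriesOfNonnegFunctions

theorem integrableOn_mul_exp_neg_mul_Ioi {b : ℝ} (hb : 0 < b) :
    IntegrableOn (fun x : ℝ ↦ x * exp (-b * x)) (Ioi 0) := by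
  simpa using integrableOn_rpow_mul_exp_neg_mul_rpow (p := 1) (s := 1) (by norm_num) one_pos hb

theorem integral_mul_exp_neg_mul_Ioi {b : ℝ} (hb : 0 < b) :
    ∫ x in Ioi 0, x * exp (-b * x) = 1 / b ^ 2 := by
  have h := integral_rpow_mul_exp_neg_mul_Ioi (a := 2) two_pos hb
  norm_num at h
  simpa only [neg_mul, one_div] using h

theorem hasSum_mul_exp_neg_mul {b x : ℝ} (hb : 0 < b) (hx : 0 < x) :
    HasSum (fun n : ℕ ↦ x * exp (-((n + 1) * b) * x))
      (x * exp (-b * x) / (1 - exp (-b * x))) := by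
  set r := exp (-b * x)
  have hr1 : r < 1 := exp_lt_one_iff.2 (by nlinarith)
  have hterm (n : ℕ) : x * exp (-((n + 1) * b) * x) = x * r * r ^ n := by
    rw [← exp_nat_mul, mul_assoc, ← exp_add]
    ring_nf
  simp_rw [hterm, div_eq_mul_inv]
  exact (hasSum_geometric_of_lt_one (exp_pos _).le hr1).mul_left (x * r)

theorem hasSum_one_div_nat_add_one_sq :
    HasSum (fun n : ℕ ↦ 1 / ((n : ℝ) + 1) ^ 2) (π ^ 2 / 6) := by
  have := (hasSum_nat_add_iff (f := fun n : ℕ ↦ 1 / (n : ℝ) ^ 2) 1).2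
    (by simpa using hasSum_zeta_two)
  simpa only [Nat.cast_add, Nat.cast_one] using this

theorem integrableOn_and_integral_mul_exp_neg_mul_div_one_sub_exp_neg_mul {b : ℝ} (hb : 0 < b) :
    IntegrableOn (fun x ↦ x * exp (-b * x) / (1 - exp (-b * x))) (Ioi 0) ∧
      ∫ x in Ioi 0, x * exp (-b * x) / (1 - exp (-b * x)) = π ^ 2 / (6 * b ^ 2) := by
  have hnb (n : ℕ) : 0 < (n + 1) * b := by positivity
  refine integrable_and_integral_eq_of_hasSum_of_nonneg
    (F := fun (n : ℕ) x ↦ x * exp (-((n + 1) * b) * x)) (fun n ↦ ?_)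
    (fun n ↦ integrableOn_mul_exp_neg_mul_Ioi (hnb n)) ?_ ?_
  · filter_upwards [ae_restrict_mem measurableSet_Ioi] with x (hx : 0 < x)
    positivity
  · have h_terms (n : ℕ) :
        1 / (((n : ℝ) + 1) * b) ^ 2 = 1 / b ^ 2 * (1 / ((n : ℝ) + 1) ^ 2) := by
      rw [mul_pow, one_div_mul_one_div, mul_comm]
    simp_rw [integral_mul_exp_neg_mul_Ioi (hnb _), h_terms]
    rw [show π ^ 2 / (6 * b ^ 2) = 1 / b ^ 2 * (π ^ 2 / 6) by ring]
    exact hasSum_one_div_nat_add_one_sq.mul_left _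
  · filter_upwards [ae_restrict_mem measurableSet_Ioi] with x hx
    exact hasSum_mul_exp_neg_mul hb hx

theorem integral_f (q : ℝ) (hq0 : 0 < q) (hq1 : q < 1) :
    IntegrableOn (fun x : ℝ => 2 * x * q ^ x / (q * (1 - q ^ x))) (Set.Ioi 0) ∧
      ∫ x in Set.Ioi (0 : ℝ), 2 * x * q ^ x / (q * (1 - q ^ x)) =
        π ^ 2 / (3 * q * Real.log q ^ 2) := by
  have hb : 0 < -log q := neg_pos.2 (log_neg hq0 hq1)
  have hf : (fun x : ℝ ↦ 2 * x * q ^ x / (q * (1 - q ^ x))) =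
      fun x ↦ 2 / q * (x * exp (-(-log q) * x) / (1 - exp (-(-log q) * x))) := by
    ext x
    rw [neg_neg, ← rpow_def_of_pos hq0, div_mul_div_comm, mul_assoc]
  obtain ⟨h_int, h_eq⟩ := integrableOn_and_integral_mul_exp_neg_mul_div_one_sub_exp_neg_mul hb
  rw [hf, integral_const_mul, h_eq]
  refine ⟨h_int.const_mul _, ?_⟩
  field_simp
  ring
end

section
/- For every q in (0,1), the sum Σ_{m=1}^∞ 2m·q^{m-1}/(1 − q^m) converges and is at most π²/(3·q·(ln q)²). -/
/-!
Expanding `1 / (1 - q ^ m)` geometrically and summing the resulting nonnegative double series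
`∑_{m,n ≥ 1} m q ^ (m n)` in the other order gives the Lambert series identity
`∑_m m q ^ m / (1 - q ^ m) = ∑_n q ^ n / (1 - q ^ n) ^ 2`.
Writing `q ^ n = exp (-2u)` we have `1 - q ^ n = 2 exp (-u) sinh u ≥ 2 u exp (-u)`, hence
`q ^ n / (1 - q ^ n) ^ 2 ≤ 1 / (n log q) ^ 2`, and `∑ 1 / n ^ 2 = π ^ 2 / 6` gives the bound.
-/

open Real

lemma div_one_sub_sq_le_one_div_log_sq {r : ℝ} (hr0 : 0 < r) (hr1 : r < 1) :
    r / (1 - r) ^ 2 ≤ 1 / log r ^ 2 := by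
  set u := -log r / 2 with hu_def
  have hu : 0 < u := by have := log_neg hr0 hr1; linarith
  have hr : r = exp (-u) ^ 2 := by
    rw [← exp_nat_mul, hu_def]; push_cast; ring_nf; exact (exp_log hr0).symm
  have hkey : 2 * u * exp (-u) ≤ 1 - r := by
    have hsinh : u < sinh u := self_lt_sinh_iff.2 hu
    have hfactor : 1 - r = exp (-u) * (2 * sinh u) := by
      have h1 : exp (-u) * exp u = 1 := by rw [← exp_add]; simp
      rw [hr, sinh_eq]
      linear_combination (-1 : ℝ) * h1
    rw [hfactor]
    nlinarith [exp_pos (-u)]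
  have hlog : log r ^ 2 = 4 * u ^ 2 := by rw [hu_def]; ring
  rw [hlog, div_le_div_iff₀ (pow_pos (by linarith) 2) (by positivity)]
  nlinarith [pow_le_pow_left₀ (by positivity) hkey 2]

theorem hasSum_succ_mul_pow_succ {𝕜 : Type*} [NormedField 𝕜] [CompleteSpace 𝕜]
    {r : 𝕜} (hr : ‖r‖ < 1) :
    HasSum (fun m : ℕ => (m + 1 : 𝕜) * r ^ (m + 1)) (r / (1 - r) ^ 2) := by
  have h := (hasSum_nat_add_iff' (f := fun n : ℕ => (n : 𝕜) * r ^ n) 1).2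
    (hasSum_coe_mul_geometric_of_norm_lt_one hr)
  simpa only [Finset.range_one, Finset.sum_singleton, Nat.cast_zero, zero_mul, sub_zero,
    Nat.cast_add, Nat.cast_one] using h

theorem hasSum_rows_of_hasSum_cols_of_nonneg {β γ : Type*} {f : β × γ → ℝ} (hf : 0 ≤ f)
    {g : β → ℝ} {h : γ → ℝ} {s : ℝ} (hg : ∀ b, HasSum (fun c => f (b, c)) (g b))
    (hh : ∀ c, HasSum (fun b => f (b, c)) (h c)) (hs : HasSum h s) : HasSum g s := by
  have hswap : Summable (f ∘ Prod.swap) :=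
    (summable_prod_of_nonneg fun p => hf p.swap).2
      ⟨fun c => (hh c).summable,
        by simpa only [Function.comp, Prod.swap, (hh _).tsum_eq] using hs.summable⟩
  obtain ⟨t, ht⟩ := hswap
  have hts : t = s := (ht.prod_fiberwise hh).unique hs
  exact hts ▸ ((Equiv.prodComm γ β).hasSum_iff.1 ht).prod_fiberwise hg

section LambertSeries

variable {q : ℝ}

lemma summable_pow_succ_div_one_sub_pow_succ_sq (hq0 : 0 ≤ q) (hq1 : q < 1) :
    Summable fun n : ℕ => q ^ (n + 1) / (1 - q ^ (n + 1)) ^ 2 := by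
  refine .of_nonneg_of_le (fun n => by positivity) (fun n => ?_)
    ((summable_geometric_of_lt_one hq0 hq1).mul_left q |>.div_const ((1 - q) ^ 2))
  rw [← pow_succ']
  have : q ^ (n + 1) ≤ q := pow_le_of_le_one hq0 hq1.le n.succ_ne_zero
  gcongr

theorem hasSum_succ_mul_pow_succ_div_one_sub (hq0 : 0 ≤ q) (hq1 : q < 1) :
    HasSum (fun m : ℕ => (m + 1 : ℝ) * q ^ (m + 1) / (1 - q ^ (m + 1)))
      (∑' n : ℕ, q ^ (n + 1) / (1 - q ^ (n + 1)) ^ 2) := by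
  have hpow (n : ℕ) : ‖q ^ (n + 1)‖ < 1 := by
    rw [norm_pow, Real.norm_of_nonneg hq0]; exact pow_lt_one₀ hq0 hq1 n.succ_ne_zero
  refine hasSum_rows_of_hasSum_cols_of_nonneg
    (f := fun p : ℕ × ℕ => (p.1 + 1 : ℝ) * q ^ ((p.1 + 1) * (p.2 + 1)))
    (fun p => by positivity)
    (fun m => ?_) (fun n => ?_) (summable_pow_succ_div_one_sub_pow_succ_sq hq0 hq1).hasSum
  · have h := (hasSum_geometric_of_norm_lt_one (hpow m)).mul_left ((m + 1 : ℝ) * q ^ (m + 1))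
    rw [← div_eq_mul_inv] at h
    exact h.congr_fun fun n => by rw [pow_mul, pow_succ' (q ^ (m + 1)) n]; ring
  · exact (hasSum_succ_mul_pow_succ (hpow n)).congr_fun fun m => by
      rw [← pow_mul, mul_comm (n + 1)]

lemma tsum_pow_succ_div_one_sub_pow_succ_sq_le (hq0 : 0 < q) (hq1 : q < 1) :
    ∑' n : ℕ, q ^ (n + 1) / (1 - q ^ (n + 1)) ^ 2 ≤ π ^ 2 / (6 * log q ^ 2) := by
  have hbasel : HasSum (fun n : ℕ => 1 / log q ^ 2 * (1 / ((n : ℝ) + 1) ^ 2))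
      (1 / log q ^ 2 * (π ^ 2 / 6)) := by
    refine HasSum.mul_left _ ?_
    simpa using (hasSum_nat_add_iff' (f := fun n : ℕ => 1 / (n : ℝ) ^ 2) 1).2 hasSum_zeta_two
  have hterm (n : ℕ) :
      q ^ (n + 1) / (1 - q ^ (n + 1)) ^ 2 ≤ 1 / log q ^ 2 * (1 / ((n : ℝ) + 1) ^ 2) :=
    calc q ^ (n + 1) / (1 - q ^ (n + 1)) ^ 2 ≤ 1 / log (q ^ (n + 1)) ^ 2 :=
          div_one_sub_sq_le_one_div_log_sq (by positivity) (pow_lt_one₀ hq0.le hq1 n.succ_ne_zero)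
      _ = _ := by rw [log_pow, Nat.cast_succ, mul_pow, one_div_mul_one_div, mul_comm]
  calc _ ≤ _ := (summable_pow_succ_div_one_sub_pow_succ_sq hq0.le hq1).tsum_le_tsum hterm
        hbasel.summable
    _ = _ := by rw [hbasel.tsum_eq]; field_simp

end LambertSeries

/-- Σ_{m≥1} 2m q^{m-1}/(1-q^m), written with m = k+1, k ≥ 0. -/
theorem sum_S_bound (q : ℝ) (hq0 : 0 < q) (hq1 : q < 1) :
    Summable (fun k : ℕ => 2 * (k + 1 : ℝ) * q ^ k / (1 - q ^ (k + 1))) ∧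
      ∑' k : ℕ, 2 * (k + 1 : ℝ) * q ^ k / (1 - q ^ (k + 1)) ≤
        π ^ 2 / (3 * q * Real.log q ^ 2) := by
  have hterm : (fun k : ℕ => 2 * (k + 1 : ℝ) * q ^ k / (1 - q ^ (k + 1))) =
      fun k : ℕ => 2 / q * ((k + 1 : ℝ) * q ^ (k + 1) / (1 - q ^ (k + 1))) := by
    ext k; field_simp; ring
  have hsum := (hasSum_succ_mul_pow_succ_div_one_sub hq0.le hq1).mul_left (2 / q)
  rw [← hterm] at hsum
  refine ⟨hsum.summable, ?_⟩
  calc _ = _ := hsum.tsum_eq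
    _ ≤ 2 / q * (π ^ 2 / (6 * log q ^ 2)) := by
      gcongr; exact tsum_pow_succ_div_one_sub_pow_succ_sq_le hq0 hq1
    _ = _ := by field_simp; ring
end

section
/- Let ρ₀ = 2^{11/2}. For every q in [0.3, 0.5], the inequality q³ − q⁶(1+q²)/((1−q²)(1−q⁴)) − 1/ρ₀² − 2^{−9/2}·(2q³/(1−q²)) > 0 holds. -/
/-! Since `1 - q⁴ = (1 - q²)(1 + q²)`, the second term is `t²` with `t = q³ / (1 - q²)`, and
`q³ = t (1 - q²)`. The expression is therefore `t (1 - q² - t - 2·2^(-9/2)) - 2⁻¹¹`, where on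
`[0.3, 0.5]` the bracket is at least `1 - 1/4 - 1/6 - 1/8` and `t ≥ q³ ≥ 0.027`. -/

lemma pow_six_mul_div_eq_sq_div (q : ℝ) (hq : q ^ 2 ≠ 1) :
    q ^ 6 * (1 + q ^ 2) / ((1 - q ^ 2) * (1 - q ^ 4)) = (q ^ 3 / (1 - q ^ 2)) ^ 2 := by
  have h₁ : 1 - q ^ 2 ≠ 0 := sub_ne_zero.mpr (Ne.symm hq)
  have h₂ : 1 + q ^ 2 ≠ 0 := by positivity
  rw [show 1 - q ^ 4 = (1 - q ^ 2) * (1 + q ^ 2) by ring]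
  field_simp

lemma two_rpow_eleven_halves_sq : ((2 : ℝ) ^ ((11 : ℝ) / 2)) ^ 2 = 2048 := by
  rw [← Real.rpow_mul_natCast (by norm_num)]
  norm_num

lemma two_rpow_neg_nine_halves_lt : (2 : ℝ) ^ (-(9 : ℝ) / 2) < 1 / 16 := by
  calc (2 : ℝ) ^ (-(9 : ℝ) / 2) < 2 ^ (-(4 : ℝ)) :=
        Real.rpow_lt_rpow_of_exponent_lt (by norm_num) (by norm_num)
    _ = 1 / 16 := by norm_num [Real.rpow_neg]

lemma cube_sub_sq_div_sub_pos_of_mem_Icc (q c : ℝ) (hq : q ∈ Set.Icc (0.3 : ℝ) 0.5) (hc : c ≤ 1 / 16) :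
    0 < q ^ 3 - (q ^ 3 / (1 - q ^ 2)) ^ 2 - 1 / 2048 - c * (2 * (q ^ 3 / (1 - q ^ 2))) := by
  obtain ⟨hq₁, hq₂⟩ := hq
  have hq0 : 0 < q := by linarith
  have hd : 3 / 4 ≤ 1 - q ^ 2 := by nlinarith
  have hd' : 1 - q ^ 2 ≤ 1 := by nlinarith
  set t := q ^ 3 / (1 - q ^ 2) with ht
  have hqt : q ^ 3 = t * (1 - q ^ 2) := by rw [ht]; field_simp
  have hq3_lower : 0.027 ≤ q ^ 3 := by nlinarith
  have hq3_upper : q ^ 3 ≤ 1 / 8 := by nlinarith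
  have ht_lower : 0.027 ≤ t := by nlinarith
  have ht_upper : t ≤ 1 / 6 := by nlinarith
  have hbracket : 11 / 24 ≤ 1 - q ^ 2 - t - 2 * c := by nlinarith
  calc (0 : ℝ) < 0.027 * (11 / 24) - 1 / 2048 := by norm_num
    _ ≤ t * (1 - q ^ 2 - t - 2 * c) - 1 / 2048 := by gcongr
    _ = q ^ 3 - t ^ 2 - 1 / 2048 - c * (2 * t) := by rw [hqt]; ring

theorem key_numerical_inequality (q : ℝ) (hq : q ∈ Set.Icc (0.3 : ℝ) 0.5) :
    0 < q ^ 3 - q ^ 6 * (1 + q ^ 2) / ((1 - q ^ 2) * (1 - q ^ 4)) -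
        1 / ((2 : ℝ) ^ ((11 : ℝ) / 2)) ^ 2 -
        (2 : ℝ) ^ (-(9 : ℝ) / 2) * (2 * q ^ 3 / (1 - q ^ 2)) := by
  have hq_sq : q ^ 2 ≠ 1 := by nlinarith [hq.1, hq.2]
  rw [pow_six_mul_div_eq_sq_div q hq_sq, two_rpow_eleven_halves_sq, mul_div_assoc]
  exact cube_sub_sq_div_sub_pos_of_mem_Icc q _ hq two_rpow_neg_nine_halves_lt.le
end

section
/- For q ∈ (0,1) and real y, writing v = q⁴ and x = iy, the partial theta function satisfies Re θ(q, iy) = θ(v, −v^{−1/4}·y²) and Im θ(q, iy) = v^{1/4}·y·θ(v, −v^{1/4}·y²). -/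
/-!
Splitting the series into even and odd indices gives
θ(q, x) = θ(q⁴, x²/q) + q x θ(q⁴, q x²). At x = i y both inner arguments, -y²/q and -q y², are
real, so the two summands are the real part and i times the imaginary part of θ(q, i y); it
remains to write q^{±1} as (q⁴)^{±1/4}.
-/

/-- The partial theta function θ(q,x) = Σ_{j≥0} q^{j(j+1)/2} x^j, complex argument. -/
noncomputable def partialTheta (q : ℝ) (x : ℂ) : ℂ :=
  ∑' j : ℕ, (q : ℂ) ^ (j * (j + 1) / 2) * x ^ j

/-- The real partial theta function. -/
noncomputable def partialThetaR (q x : ℝ) : ℝ :=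
  ∑' j : ℕ, q ^ (j * (j + 1) / 2) * x ^ j

open Filter

lemma triangle_succ_eq (n : ℕ) : (n + 1) * (n + 1 + 1) / 2 = n * (n + 1) / 2 + (n + 1) := by
  rw [show (n + 1) * (n + 1 + 1) = n * (n + 1) + 2 * (n + 1) by ring,
    Nat.add_mul_div_left _ _ two_pos]

lemma triangle_two_mul (k : ℕ) : 2 * k * (2 * k + 1) / 2 = k * (2 * k + 1) := by
  rw [mul_assoc, Nat.mul_div_cancel_left _ two_pos]

lemma triangle_two_mul_add_one (k : ℕ) :
    (2 * k + 1) * (2 * k + 1 + 1) / 2 = (2 * k + 1) * (k + 1) := by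
  rw [show (2 * k + 1) * (2 * k + 1 + 1) = 2 * ((2 * k + 1) * (k + 1)) by ring,
    Nat.mul_div_cancel_left _ two_pos]

lemma four_mul_triangle (k : ℕ) : 4 * (k * (k + 1) / 2) = 2 * k * (k + 1) := by
  rw [show 4 = 2 * 2 by rfl, mul_assoc, Nat.mul_div_cancel' (Nat.even_mul_succ_self k).two_dvd,
    mul_assoc]

lemma summable_partialTheta_term {q : ℝ} (hq : |q| < 1) (x : ℂ) :
    Summable fun j : ℕ ↦ (q : ℂ) ^ (j * (j + 1) / 2) * x ^ j := by
  refine summable_of_ratio_norm_eventually_le one_half_lt_one ?_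
  have hlim : Tendsto (fun n : ℕ ↦ |q| ^ (n + 1) * ‖x‖) atTop (nhds 0) := by
    simpa using ((tendsto_pow_atTop_nhds_zero_of_lt_one (abs_nonneg q) hq).comp
      (tendsto_add_atTop_nat 1)).mul_const ‖x‖
  filter_upwards [hlim.eventually_le_const one_half_pos] with n hn
  simp only [norm_mul, norm_pow, Complex.norm_real, Real.norm_eq_abs, triangle_succ_eq, pow_add,
    pow_succ]
  calc |q| ^ (n * (n + 1) / 2) * (|q| ^ n * |q|) * (‖x‖ ^ n * ‖x‖)
      = |q| ^ (n + 1) * ‖x‖ * (|q| ^ (n * (n + 1) / 2) * ‖x‖ ^ n) := by ring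
    _ ≤ 1 / 2 * (|q| ^ (n * (n + 1) / 2) * ‖x‖ ^ n) := by gcongr

theorem partialTheta_eq_even_add_odd {q : ℝ} (hq0 : q ≠ 0) (hq1 : |q| < 1) (x : ℂ) :
    partialTheta q x =
      partialTheta (q ^ 4) (x ^ 2 / q) + q * x * partialTheta (q ^ 4) (q * x ^ 2) := by
  have hs := summable_partialTheta_term hq1 x
  have hq : (q : ℂ) ≠ 0 := Complex.ofReal_ne_zero.mpr hq0
  have h2 : Function.Injective (2 * · : ℕ → ℕ) := mul_right_injective₀ two_ne_zero
  rw [partialTheta, ← tsum_even_add_odd (f := fun j : ℕ ↦ (q : ℂ) ^ (j * (j + 1) / 2) * x ^ j)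
    (hs.comp_injective h2) (hs.comp_injective ((add_left_injective 1).comp h2)),
    partialTheta, partialTheta, ← tsum_mul_left]
  congr 1 <;> refine tsum_congr fun k ↦ ?_
  · rw [triangle_two_mul, Complex.ofReal_pow, ← pow_mul, four_mul_triangle, div_pow, ← pow_mul,
      show 2 * k * (k + 1) = k * (2 * k + 1) + k by ring, pow_add]
    field_simp
  · rw [triangle_two_mul_add_one, Complex.ofReal_pow, ← pow_mul, four_mul_triangle]
    ring

theorem partialTheta_ofReal (q x : ℝ) : partialTheta q x = partialThetaR q x := by
  rw [partialThetaR, Complex.ofReal_tsum]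
  push_cast
  rfl

theorem partialTheta_I_mul {q : ℝ} (hq0 : q ≠ 0) (hq1 : |q| < 1) (y : ℝ) :
    partialTheta q (Complex.I * y) =
      partialThetaR (q ^ 4) (-q⁻¹ * y ^ 2) +
        Complex.I * (q * y * partialThetaR (q ^ 4) (-q * y ^ 2) : ℝ) := by
  have hsq : (Complex.I * y) ^ 2 = ((-y ^ 2 : ℝ) : ℂ) := by
    push_cast
    rw [mul_pow, Complex.I_sq]
    ring
  rw [partialTheta_eq_even_add_odd hq0 hq1, hsq, ← Complex.ofReal_div, ← Complex.ofReal_mul,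
    partialTheta_ofReal, partialTheta_ofReal, neg_div, div_eq_inv_mul, mul_neg, ← neg_mul,
    ← neg_mul]
  push_cast
  ring

lemma pow_four_rpow_div_four {q : ℝ} (hq : 0 ≤ q) (s : ℝ) :
    (q ^ 4) ^ (s / 4) = q ^ s := by
  rw [← Real.rpow_natCast, ← Real.rpow_mul hq, Nat.cast_ofNat, mul_div_cancel₀ s four_ne_zero]

theorem theta_re_im_on_imaginary_axis (q : ℝ) (hq0 : 0 < q) (hq1 : q < 1) (y : ℝ) :
    (partialTheta q (Complex.I * (y : ℂ))).re =
        partialThetaR (q ^ 4) (-(q ^ 4 : ℝ) ^ (-(1 : ℝ) / 4) * y ^ 2) ∧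
      (partialTheta q (Complex.I * (y : ℂ))).im =
        (q ^ 4 : ℝ) ^ ((1 : ℝ) / 4) * y *
          partialThetaR (q ^ 4) (-(q ^ 4 : ℝ) ^ ((1 : ℝ) / 4) * y ^ 2) := by
  rw [partialTheta_I_mul hq0.ne' (abs_lt.mpr ⟨by linarith, hq1⟩),
    pow_four_rpow_div_four hq0.le, pow_four_rpow_div_four hq0.le, Real.rpow_neg_one,
    Real.rpow_one]
  simp
end
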